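/- arXiv:2207.04299 — 3 statements merged into one kernel-verified Lean document; each statement's English description precedes it below -/
import Mathlib

section
/- Let Y be a discrete random variable taking values in {0,1,...,J} with CDF π(y) = P(Y ≤ y) (with π(-1)=0, π(J)=1, and π(y) strictly increasing on attained values). Define the functional residual Res(t; y) = P(U ≤ t) where U ~ Uniform(π(y-1), π(y)). Then for every t ∈ [0,1], E_Y[Res(t; Y)] = t. -/
/-- The CDF of the uniform distribution on `(a, b)`, evaluated at `t`. -/
noncomputable def unifCDF (a b t : ℝ) : ℝ := max 0 (min 1 ((t - a) / (b - a)))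

/-- `prevCDF π y = π (y-1)`, with the convention `π (-1) = 0`. -/
noncomputable def prevCDF (π : ℕ → ℝ) (y : ℕ) : ℝ := if y = 0 then 0 else π (y - 1)

/-- The functional residual `Res(t; y)` for the working CDF `π`. -/
noncomputable def Res (π : ℕ → ℝ) (y : ℕ) (t : ℝ) : ℝ := unifCDF (prevCDF π y) (π y) t

lemma key_unifCDF (a b t : ℝ) (hab : a < b) :
    (b - a) * unifCDF a b t = min b t - min a t := by
  unfold unifCDF
  have hba : (0:ℝ) < b - a := sub_pos.mpr hab
  rcases le_or_gt t a with h1 | h1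
  · have hq : (t - a) / (b - a) ≤ 0 := by apply div_nonpos_of_nonpos_of_nonneg <;> linarith
    rw [min_eq_right (h1.trans hab.le), min_eq_right h1,
      min_eq_right (hq.trans zero_le_one), max_eq_left hq]
    ring
  rcases le_or_gt b t with h2 | h2
  · have hq : (1:ℝ) ≤ (t - a) / (b - a) := (one_le_div hba).mpr (by linarith)
    rw [min_eq_left hq, min_eq_left h2, min_eq_left h1.le, max_eq_right zero_le_one]
    ring
  · have hq0 : (0:ℝ) ≤ (t - a) / (b - a) := div_nonneg (by linarith) hba.le
    have hq1 : (t - a) / (b - a) ≤ 1 := (div_le_one hba).mpr (by linarith)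
    rw [min_eq_right h2.le, min_eq_left h1.le, min_eq_right hq1, max_eq_right hq0]
    field_simp

/-- for a discrete r.v. on `{0,…,J}` with strictly increasing CDF `π`
(`π(-1)=0`, `π J = 1`), the expectation of the functional residual is `t`. -/
theorem functional_residual_conditional_expectation
    (J : ℕ) (π : ℕ → ℝ)
    (hinc : ∀ y ≤ J, prevCDF π y < π y)
    (hlast : π J = 1)
    (t : ℝ) (ht : t ∈ Set.Icc (0:ℝ) 1) :
    ∑ y ∈ Finset.range (J + 1), (π y - prevCDF π y) * Res π y t = t := by
  obtain ⟨ht0, ht1⟩ := ht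
  have hsum : ∑ y ∈ Finset.range (J + 1), (π y - prevCDF π y) * Res π y t
      = ∑ y ∈ Finset.range (J + 1),
        (min (prevCDF π (y + 1)) t - min (prevCDF π y) t) := by
    apply Finset.sum_congr rfl
    intro y hy
    have hyJ : y ≤ J := Nat.lt_succ_iff.mp (Finset.mem_range.mp hy)
    have hprev : prevCDF π (y + 1) = π y := by simp [prevCDF]
    rw [hprev, Res, key_unifCDF _ _ _ (hinc y hyJ)]
  rw [hsum, Finset.sum_range_sub (fun y => min (prevCDF π y) t)]
  have h0 : prevCDF π 0 = 0 := by simp [prevCDF]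
  have hJ : prevCDF π (J + 1) = π J := by simp [prevCDF]
  rw [h0, hJ, hlast, min_eq_right ht1, min_eq_left ht0, sub_zero]
end

section
/- Let Y be discrete with CDF F (with F(−1) = 0) and suppose F is strictly increasing on the support. For an independent copy Y' of Y, define R_SBS(y) = P(Y' < y) − P(Y' > y) = F(y−1) + F(y) − 1. Then R_SBS(y) ∈ [−1, 1], R_SBS is nondecreasing in y, and E[R_SBS(Y)] = 0, but in general Var(R_SBS(Y)) < 1/3 with equality replaced by the continuous uniform limit only when the discrete masses vanish. -/
/-- CDF `F(y) = P(Y ≤ y)` of the pmf `p`. -/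
noncomputable def Fc (p : ℕ → ℝ) (y : ℕ) : ℝ := ∑ j ∈ Finset.range (y + 1), p j
/-- `F(y−1) = P(Y < y)`, with `F(−1) = 0`. -/
noncomputable def Fcprev (p : ℕ → ℝ) (y : ℕ) : ℝ := ∑ j ∈ Finset.range y, p j
/-- The sign-based residual `R_SBS(y) = F(y−1) + F(y) − 1`. -/
noncomputable def RSBS (p : ℕ → ℝ) (y : ℕ) : ℝ := Fcprev p y + Fc p y - 1

/-- the sign-based residual lies in `[−1,1]`, is nondecreasing in `y`,
has mean `0`, and its variance equals `1/3 − (1/3)∑ p(y)³`, hence is strictly less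
than `1/3`. -/
theorem sign_based_residual_properties
    (J : ℕ) (p : ℕ → ℝ) (hp : ∀ y, 0 ≤ p y)
    (hzero : ∀ y, J < y → p y = 0)
    (hsum : ∑ y ∈ Finset.range (J + 1), p y = 1)
    (hsupp : ∀ y ≤ J, 0 < p y) :
    (∀ y, RSBS p y ∈ Set.Icc (-1 : ℝ) 1) ∧
    Monotone (RSBS p) ∧
    (∑ y ∈ Finset.range (J + 1), p y * RSBS p y) = 0 ∧
    (∑ y ∈ Finset.range (J + 1),
        p y * (RSBS p y - ∑ z ∈ Finset.range (J + 1), p z * RSBS p z) ^ 2)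
      = 1 / 3 - (1 / 3) * ∑ y ∈ Finset.range (J + 1), p y ^ 3 ∧
    (∑ y ∈ Finset.range (J + 1),
        p y * (RSBS p y - ∑ z ∈ Finset.range (J + 1), p z * RSBS p z) ^ 2)
      < 1 / 3 := by
  have hFc : ∀ y, Fc p y = Fcprev p y + p y := fun y => Finset.sum_range_succ p y
  have hsucc : ∀ y, Fcprev p (y + 1) = Fc p y := fun _ => rfl
  have hprev0 : Fcprev p 0 = 0 := by simp [Fcprev]
  have hFcJ : Fc p J = 1 := hsum
  have hprev_nonneg : ∀ y, 0 ≤ Fcprev p y :=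
    fun y => Finset.sum_nonneg fun j _ => hp j
  have hprev_mono : Monotone (Fcprev p) := fun y z h =>
    Finset.sum_le_sum_of_subset_of_nonneg (Finset.range_subset_range.2 h) fun i _ _ => hp i
  have hFc_mono : Monotone (Fc p) := fun y z h =>
    Finset.sum_le_sum_of_subset_of_nonneg (Finset.range_subset_range.2 (by omega))
      fun i _ _ => hp i
  have hFc_ge : ∀ y, J ≤ y → Fc p y = 1 := by
    intro y hy
    rw [← hsum]
    exact (Finset.sum_subset (Finset.range_subset_range.2 (by omega))
      fun x hx hnx => hzero x (by simpa using hnx)).symm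
  have hFc_le_one : ∀ y, Fc p y ≤ 1 := by
    intro y
    rcases le_or_gt y J with h | h
    · calc Fc p y ≤ Fc p J := hFc_mono h
        _ = 1 := hFcJ
    · exact le_of_eq (hFc_ge y h.le)
  -- telescoping sums
  have tel : ∀ k : ℕ, ∑ y ∈ Finset.range (J + 1),
      ((Fc p y) ^ k - (Fcprev p y) ^ k) = 1 - (0 : ℝ) ^ k := by
    intro k
    have h := Finset.sum_range_sub (fun y => (Fcprev p y) ^ k) (J + 1)
    simp only [hsucc] at h
    rw [h, hprev0, hFcJ, one_pow]
  have h1 : ∑ y ∈ Finset.range (J + 1), (Fc p y - Fcprev p y) = 1 := by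
    have := tel 1; simpa using this
  have h2 : ∑ y ∈ Finset.range (J + 1), ((Fc p y) ^ 2 - (Fcprev p y) ^ 2) = 1 := by
    have := tel 2; simpa using this
  have h3 : ∑ y ∈ Finset.range (J + 1), ((Fc p y) ^ 3 - (Fcprev p y) ^ 3) = 1 := by
    have := tel 3; simpa using this
  -- mean zero
  have mean : (∑ y ∈ Finset.range (J + 1), p y * RSBS p y) = 0 := by
    have key : ∀ y ∈ Finset.range (J + 1), p y * RSBS p y =
        ((Fc p y) ^ 2 - (Fcprev p y) ^ 2) - (Fc p y - Fcprev p y) := by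
      intro y _
      simp only [RSBS]
      rw [hFc y]
      ring
    rw [Finset.sum_congr rfl key, Finset.sum_sub_distrib, h1, h2]
    ring
  -- second moment
  have var : (∑ y ∈ Finset.range (J + 1), p y * (RSBS p y) ^ 2)
      = 1 / 3 - (1 / 3) * ∑ y ∈ Finset.range (J + 1), p y ^ 3 := by
    have key : ∀ y ∈ Finset.range (J + 1), p y * (RSBS p y) ^ 2 =
        ((4 : ℝ) / 3) * ((Fc p y) ^ 3 - (Fcprev p y) ^ 3)
          - 2 * ((Fc p y) ^ 2 - (Fcprev p y) ^ 2)
          + (Fc p y - Fcprev p y) - (1 / 3) * (p y) ^ 3 := by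
      intro y _
      simp only [RSBS]
      rw [hFc y]
      ring
    rw [Finset.sum_congr rfl key]
    rw [Finset.sum_sub_distrib] at h1 h2 h3
    simp only [Finset.sum_sub_distrib, Finset.sum_add_distrib, ← Finset.mul_sum]
    rw [h1, h2, h3]
    ring
  refine ⟨?_, ?_, mean, ?_, ?_⟩
  · intro y
    have h0 : 0 ≤ Fcprev p y := hprev_nonneg y
    have hab : Fcprev p y ≤ Fc p y := by
      have := hp y; rw [hFc y]; linarith
    have hb1 : Fc p y ≤ 1 := hFc_le_one y
    simp only [RSBS, Set.mem_Icc]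
    constructor <;> linarith
  · intro y z h
    have h1' := hprev_mono h
    have h2' := hFc_mono h
    simp only [RSBS]
    linarith
  · rw [mean]
    simpa using var
  · rw [mean]
    have hpos : 0 < ∑ y ∈ Finset.range (J + 1), p y ^ 3 := by
      apply Finset.sum_pos
      · intro i hi
        exact pow_pos (hsupp i (by simpa using Nat.lt_succ_iff.1 (Finset.mem_range.1 hi))) 3
      · exact ⟨0, Finset.mem_range.2 (Nat.succ_pos J)⟩
    have := var
    simp only [sub_zero] at *
    rw [this]
    linarith
end

section
/- Let π, π₀ be two discrete CDFs on {0,...,J} with π strictly increasing on its support, and let Y ~ π₀. Define Res(t; y) as the CDF of Uniform(π(y−1), π(y)). Then for t ∈ [0,1] with π(y_t − 1) ≤ t ≤ π(y_t) for some y_t, E_Y[Res(t; Y)] = π₀(y_t − 1) + [(t − π(y_t − 1))/(π(y_t) − π(y_t − 1))]·(π₀(y_t) − π₀(y_t − 1)). In particular, E_Y[Res(t; Y)] = t for all t if and only if π = π₀ on {0,...,J}. -/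
/-! The sum `∑ y ≤ J, (π₀ y - π₀ (y - 1)) * Res π y t` is `E_Y[Res(t; Y)]` for `Y ~ π₀`. For `t`
in the knot interval `[π (y_t - 1), π y_t]`, monotonicity of `π` makes `Res π y t` equal to `1`
below `y_t` and `0` above it, so the sum telescopes to `π₀ (y_t - 1)` plus the interpolating
term at `y_t`. Evaluating at the knot `t = π y` gives `π₀ y`, which yields the characterisation
of the correct model. -/

open Finset

section unifCDF

variable {a b t : ℝ}

lemma unifCDF_of_le_left (hab : a ≤ b) (ht : t ≤ a) : unifCDF a b t = 0 := by
  have : (t - a) / (b - a) ≤ 0 := div_nonpos_of_nonpos_of_nonneg (by linarith) (by linarith)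
  rw [unifCDF, min_eq_right (by linarith), max_eq_left this]

lemma unifCDF_of_right_le (hab : a < b) (ht : b ≤ t) : unifCDF a b t = 1 := by
  have : 1 ≤ (t - a) / (b - a) := (le_div_iff₀ (by linarith)).mpr (by linarith)
  rw [unifCDF, min_eq_left this, max_eq_right zero_le_one]

lemma unifCDF_of_mem_Icc (hat : a ≤ t) (htb : t ≤ b) : unifCDF a b t = (t - a) / (b - a) := by
  have h₀ : 0 ≤ (t - a) / (b - a) := div_nonneg (by linarith) (by linarith)
  have h₁ : (t - a) / (b - a) ≤ 1 := div_le_one_of_le₀ (by linarith) (by linarith)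
  rw [unifCDF, min_eq_right h₁, max_eq_right h₀]

end unifCDF

section prevCDF

variable {π : ℕ → ℝ} {J : ℕ}

@[simp] lemma prevCDF_zero (π : ℕ → ℝ) : prevCDF π 0 = 0 := if_pos rfl

@[simp] lemma prevCDF_add_one (π : ℕ → ℝ) (n : ℕ) : prevCDF π (n + 1) = π n := by
  simp [prevCDF]

lemma prevCDF_of_ne_zero {y : ℕ} (hy : y ≠ 0) : prevCDF π y = π (y - 1) := if_neg hy

lemma sum_range_sub_prevCDF (π : ℕ → ℝ) (n : ℕ) :
    ∑ y ∈ range n, (π y - prevCDF π y) = prevCDF π n := by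
  simpa using sum_range_sub (prevCDF π) n

lemma monotoneOn_Iic_of_prevCDF_le (h : ∀ y ≤ J, prevCDF π y ≤ π y) :
    MonotoneOn π (Set.Iic J) :=
  monotoneOn_of_le_succ Set.ordConnected_Iic fun y _ _ hy => by
    simpa [Order.succ_eq_add_one] using h (y + 1) hy

lemma exists_prevCDF_le_and_le {t : ℝ} (ht₀ : 0 ≤ t) (htJ : t ≤ π J) :
    ∃ y ≤ J, prevCDF π y ≤ t ∧ t ≤ π y := by
  classical
  have hex : ∃ y, t ≤ π y := ⟨J, htJ⟩
  refine ⟨Nat.find hex, Nat.find_min' hex htJ, ?_, Nat.find_spec hex⟩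
  rcases Nat.eq_zero_or_eq_succ_pred (Nat.find hex) with h | h
  · simpa [h] using ht₀
  · rw [h, prevCDF_add_one]
    exact (not_le.mp (Nat.find_min hex (by omega))).le

end prevCDF

section Res

variable {π : ℕ → ℝ} {J y yt : ℕ} {t : ℝ}

lemma Res_of_lt (hπ : ∀ y ≤ J, prevCDF π y < π y) (hy : y < yt) (hyt : yt ≤ J)
    (ht : prevCDF π yt ≤ t) : Res π y t = 1 := by
  have hmono := monotoneOn_Iic_of_prevCDF_le fun y hy => (hπ y hy).le
  have : π y ≤ prevCDF π yt := by
    rw [prevCDF_of_ne_zero (by omega)]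
    exact hmono (by simp; omega) (by simp; omega) (by omega)
  exact unifCDF_of_right_le (hπ y (by omega)) (this.trans ht)

lemma Res_of_gt (hπ : ∀ y ≤ J, prevCDF π y ≤ π y) (hy : yt < y) (hyJ : y ≤ J)
    (ht : t ≤ π yt) : Res π y t = 0 := by
  have : π yt ≤ prevCDF π y := by
    rw [prevCDF_of_ne_zero (by omega)]
    exact monotoneOn_Iic_of_prevCDF_le hπ (by simp; omega) (by simp; omega) (by omega)
  exact unifCDF_of_le_left (hπ y hyJ) (ht.trans this)

lemma sum_mul_Res_eq (π₀ : ℕ → ℝ) (hπ : ∀ y ≤ J, prevCDF π y < π y) (hyt : yt ≤ J)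
    (ht₁ : prevCDF π yt ≤ t) (ht₂ : t ≤ π yt) :
    ∑ y ∈ range (J + 1), (π₀ y - prevCDF π₀ y) * Res π y t
      = prevCDF π₀ yt
          + ((t - prevCDF π yt) / (π yt - prevCDF π yt)) * (π₀ yt - prevCDF π₀ yt) := by
  have below : ∀ y ∈ range yt, (π₀ y - prevCDF π₀ y) * Res π y t = π₀ y - prevCDF π₀ y :=
    fun y hy => by rw [Res_of_lt hπ (mem_range.mp hy) hyt ht₁, mul_one]
  have above : ∀ y ∈ Ico (yt + 1) (J + 1), (π₀ y - prevCDF π₀ y) * Res π y t = 0 := by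
    intro y hy
    rw [mem_Ico] at hy
    rw [Res_of_gt (fun y hy => (hπ y hy).le) (by omega) (by omega) ht₂, mul_zero]
  rw [← sum_range_add_sum_Ico _ (by omega : yt + 1 ≤ J + 1), sum_eq_zero above, add_zero,
    sum_range_succ, sum_congr rfl below, sum_range_sub_prevCDF, Res,
    unifCDF_of_mem_Icc ht₁ ht₂]
  ring

lemma sum_mul_Res_at_knot (π₀ : ℕ → ℝ) (hπ : ∀ y ≤ J, prevCDF π y < π y) (hy : y ≤ J) :
    ∑ x ∈ range (J + 1), (π₀ x - prevCDF π₀ x) * Res π x (π y) = π₀ y := by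
  have hgap : π y - prevCDF π y ≠ 0 := sub_ne_zero.mpr (hπ y hy).ne'
  rw [sum_mul_Res_eq π₀ hπ hy (hπ y hy).le le_rfl, div_self hgap, one_mul]
  ring

lemma sum_mul_Res_self (hπ : ∀ y ≤ J, prevCDF π y < π y) (ht₀ : 0 ≤ t) (htJ : t ≤ π J) :
    ∑ y ∈ range (J + 1), (π y - prevCDF π y) * Res π y t = t := by
  obtain ⟨yt, hyt, ht₁, ht₂⟩ := exists_prevCDF_le_and_le ht₀ htJ
  have hgap : π yt - prevCDF π yt ≠ 0 := sub_ne_zero.mpr (hπ yt hyt).ne'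
  rw [sum_mul_Res_eq π hπ hyt ht₁ ht₂, div_mul_cancel₀ _ hgap]
  ring

end Res

theorem functional_residual_expectation_misspecified_general
    (J : ℕ) (π π₀ : ℕ → ℝ)
    (hπinc : ∀ y ≤ J, prevCDF π y < π y) (hπJ : π J = 1) :
    (∀ t ∈ Set.Icc (0:ℝ) 1, ∀ yt ≤ J, prevCDF π yt ≤ t → t ≤ π yt →
      ∑ y ∈ Finset.range (J + 1), (π₀ y - prevCDF π₀ y) * Res π y t
        = prevCDF π₀ yt
            + ((t - prevCDF π yt) / (π yt - prevCDF π yt)) * (π₀ yt - prevCDF π₀ yt)) ∧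
    ((∀ t ∈ Set.Icc (0:ℝ) 1,
        ∑ y ∈ Finset.range (J + 1), (π₀ y - prevCDF π₀ y) * Res π y t = t)
      ↔ ∀ y ≤ J, π y = π₀ y) := by
  have hmono := monotoneOn_Iic_of_prevCDF_le fun y hy => (hπinc y hy).le
  refine ⟨fun t _ yt hyt ht₁ ht₂ => sum_mul_Res_eq π₀ hπinc hyt ht₁ ht₂, fun H y hy => ?_,
    fun H t ht => ?_⟩
  · have hπ₀ : (0 : ℝ) < π 0 := by simpa using hπinc 0 (Nat.zero_le J)
    have h₀ : 0 ≤ π y := hπ₀.le.trans (hmono (by simp) (by simpa using hy) (Nat.zero_le y))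
    have h₁ : π y ≤ 1 := hπJ ▸ hmono (by simpa using hy) (by simp) hy
    rw [← H (π y) ⟨h₀, h₁⟩, sum_mul_Res_at_knot π₀ hπinc hy]
  · have hincr : ∀ y ∈ range (J + 1), π₀ y - prevCDF π₀ y = π y - prevCDF π y := by
      intro y hy
      rw [mem_range] at hy
      rcases Nat.eq_zero_or_eq_succ_pred y with h | h
      · simp [h, H 0 (Nat.zero_le J)]
      · rw [h, prevCDF_add_one, prevCDF_add_one, H _ (by omega), H _ (by omega)]
    rw [sum_congr rfl fun y hy => by rw [hincr y hy]]
    exact sum_mul_Res_self hπinc ht.1 (hπJ ▸ ht.2)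

/-- with working CDF `π` (strictly increasing, `π J = 1`) and true CDF
`π₀`, the expectation of the functional residual is the piecewise-linear interpolant of
`π₀` at the knots of `π`; it equals the identity for all `t ∈ [0,1]` iff `π = π₀` on
`{0,…,J}`. -/
theorem functional_residual_expectation_misspecified
    (J : ℕ) (π π₀ : ℕ → ℝ)
    (hπinc : ∀ y ≤ J, prevCDF π y < π y) (hπJ : π J = 1)
    (hπ₀mono : ∀ y ≤ J, prevCDF π₀ y ≤ π₀ y) (hπ₀0 : 0 ≤ π₀ 0) (hπ₀J : π₀ J = 1) :
    (∀ t ∈ Set.Icc (0:ℝ) 1, ∀ yt ≤ J, prevCDF π yt ≤ t → t ≤ π yt →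
      ∑ y ∈ Finset.range (J + 1), (π₀ y - prevCDF π₀ y) * Res π y t
        = prevCDF π₀ yt
            + ((t - prevCDF π yt) / (π yt - prevCDF π yt)) * (π₀ yt - prevCDF π₀ yt)) ∧
    ((∀ t ∈ Set.Icc (0:ℝ) 1,
        ∑ y ∈ Finset.range (J + 1), (π₀ y - prevCDF π₀ y) * Res π y t = t)
      ↔ ∀ y ≤ J, π y = π₀ y) :=
  functional_residual_expectation_misspecified_general J π π₀ hπinc hπJ
end
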